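/- arXiv:2508.04104 — 9 statements merged into one kernel-verified Lean document; each statement's English description precedes it below -/
import Mathlib

section
/- Let F be a field, n a positive integer, A ∈ M_{n×n²}(F), λ ∈ F, and g ∈ GL_n(F). If λ Tr₁(A) = Tr₂(A), then λ Tr₁(g A (g⁻¹ ⊗ g⁻¹)) = Tr₂(g A (g⁻¹ ⊗ g⁻¹)). In particular, each of the conditions 'Tr₁(A), Tr₂(A) linearly independent', 'λTr₁(A) = Tr₂(A) with both nonzero', 'Tr₁(A) ≠ 0 and Tr₂(A) = 0', 'Tr₁(A) = 0 and Tr₂(A) ≠ 0', 'Tr₁(A) = Tr₂(A) = 0' is invariant under the base change A ↦ g A (g⁻¹ ⊗ g⁻¹). -/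
open Matrix Kronecker

/-- The first trace vector of an MSC `A ∈ M_{n×n²}(F)`: `(Tr₁ A)_i = Σ_j a^j_{j i}`. -/
def Tr1 {F : Type*} [Field F] {n : ℕ} (A : Matrix (Fin n) (Fin n × Fin n) F) :
    Fin n → F :=
  fun i => ∑ j, A j (j, i)

/-- The second trace vector of an MSC `A ∈ M_{n×n²}(F)`: `(Tr₂ A)_i = Σ_j a^j_{i j}`. -/
def Tr2 {F : Type*} [Field F] {n : ℕ} (A : Matrix (Fin n) (Fin n × Fin n) F) :
    Fin n → F :=
  fun i => ∑ j, A j (i, j)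

lemma tr1_base {F : Type*} [Field F] {n : ℕ}
    (A : Matrix (Fin n) (Fin n × Fin n) F) (g : GL (Fin n) F) :
    Tr1 ((g : Matrix (Fin n) (Fin n) F) * A *
        (((g⁻¹ : GL (Fin n) F) : Matrix (Fin n) (Fin n) F) ⊗ₖ
          ((g⁻¹ : GL (Fin n) F) : Matrix (Fin n) (Fin n) F)))
      = (Tr1 A) ᵥ* ((g⁻¹ : GL (Fin n) F) : Matrix (Fin n) (Fin n) F) := by
  funext i
  set G := ((g⁻¹ : GL (Fin n) F) : Matrix (Fin n) (Fin n) F) with hG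
  have hGg : G * (g : Matrix (Fin n) (Fin n) F) = 1 := by
    simp only [hG]
    simp only [Matrix.coe_units_inv]
    exact Matrix.nonsing_inv_mul _ ((Matrix.isUnit_iff_isUnit_det _).mp g.isUnit)
  simp only [Tr1, Matrix.vecMul, Matrix.mul_apply, Matrix.kroneckerMap_apply, dotProduct]
  have step : ∀ p : Fin n × Fin n,
      ∑ k, (∑ j, (g : Matrix (Fin n) (Fin n) F) k j * A j p) * (G p.1 k * G p.2 i)
        = A p.1 p * G p.2 i := by
    intro p
    calc ∑ k, (∑ j, (g : Matrix (Fin n) (Fin n) F) k j * A j p) * (G p.1 k * G p.2 i)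
        = ∑ k, ∑ j, (A j p * G p.2 i) * (G p.1 k * (g : Matrix (Fin n) (Fin n) F) k j) := by
          refine Finset.sum_congr rfl fun k _ => ?_
          rw [Finset.sum_mul]
          exact Finset.sum_congr rfl fun j _ => by ring
      _ = ∑ j, (A j p * G p.2 i) * ∑ k, G p.1 k * (g : Matrix (Fin n) (Fin n) F) k j := by
          rw [Finset.sum_comm]
          simp [Finset.mul_sum]
      _ = ∑ j, (A j p * G p.2 i) * (1 : Matrix (Fin n) (Fin n) F) p.1 j := by
          simp_rw [← Matrix.mul_apply, hGg]
      _ = A p.1 p * G p.2 i := by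
          simp [Matrix.one_apply]
  rw [Finset.sum_comm]
  simp_rw [step]
  rw [Fintype.sum_prod_type]
  rw [Finset.sum_comm]
  exact Finset.sum_congr rfl fun x _ => by rw [Finset.sum_mul]

lemma tr2_base {F : Type*} [Field F] {n : ℕ}
    (A : Matrix (Fin n) (Fin n × Fin n) F) (g : GL (Fin n) F) :
    Tr2 ((g : Matrix (Fin n) (Fin n) F) * A *
        (((g⁻¹ : GL (Fin n) F) : Matrix (Fin n) (Fin n) F) ⊗ₖ
          ((g⁻¹ : GL (Fin n) F) : Matrix (Fin n) (Fin n) F)))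
      = (Tr2 A) ᵥ* ((g⁻¹ : GL (Fin n) F) : Matrix (Fin n) (Fin n) F) := by
  funext i
  set G := ((g⁻¹ : GL (Fin n) F) : Matrix (Fin n) (Fin n) F) with hG
  have hGg : G * (g : Matrix (Fin n) (Fin n) F) = 1 := by
    simp only [hG]
    simp only [Matrix.coe_units_inv]
    exact Matrix.nonsing_inv_mul _ ((Matrix.isUnit_iff_isUnit_det _).mp g.isUnit)
  simp only [Tr2, Matrix.vecMul, Matrix.mul_apply, Matrix.kroneckerMap_apply, dotProduct]
  have step : ∀ p : Fin n × Fin n,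
      ∑ k, (∑ j, (g : Matrix (Fin n) (Fin n) F) k j * A j p) * (G p.1 i * G p.2 k)
        = A p.2 p * G p.1 i := by
    intro p
    calc ∑ k, (∑ j, (g : Matrix (Fin n) (Fin n) F) k j * A j p) * (G p.1 i * G p.2 k)
        = ∑ k, ∑ j, (A j p * G p.1 i) * (G p.2 k * (g : Matrix (Fin n) (Fin n) F) k j) := by
          refine Finset.sum_congr rfl fun k _ => ?_
          rw [Finset.sum_mul]
          exact Finset.sum_congr rfl fun j _ => by ring
      _ = ∑ j, (A j p * G p.1 i) * ∑ k, G p.2 k * (g : Matrix (Fin n) (Fin n) F) k j := by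
          rw [Finset.sum_comm]
          simp [Finset.mul_sum]
      _ = ∑ j, (A j p * G p.1 i) * (1 : Matrix (Fin n) (Fin n) F) p.2 j := by
          simp_rw [← Matrix.mul_apply, hGg]
      _ = A p.2 p * G p.1 i := by
          simp [Matrix.one_apply]
  rw [Finset.sum_comm]
  simp_rw [step]
  rw [Fintype.sum_prod_type]
  exact Finset.sum_congr rfl fun x _ => by rw [Finset.sum_mul]

/-- vecMul by the inverse of a unit, as a linear equivalence. -/
noncomputable def vecMulEquiv {F : Type*} [Field F] {n : ℕ} (g : GL (Fin n) F) :
    (Fin n → F) ≃ₗ[F] (Fin n → F) :=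
  LinearEquiv.ofLinear
    (Matrix.vecMulLinear ((g⁻¹ : GL (Fin n) F) : Matrix (Fin n) (Fin n) F))
    (Matrix.vecMulLinear (g : Matrix (Fin n) (Fin n) F))
    (by
      apply LinearMap.ext
      intro v
      simp only [LinearMap.comp_apply, Matrix.vecMulLinear_apply, Matrix.vecMul_vecMul,
        LinearMap.id_apply]
      have : (g : Matrix (Fin n) (Fin n) F) *
          ((g⁻¹ : GL (Fin n) F) : Matrix (Fin n) (Fin n) F) = 1 := by
        simp only [Matrix.coe_units_inv]
        exact Matrix.mul_nonsing_inv _ ((Matrix.isUnit_iff_isUnit_det _).mp g.isUnit)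
      rw [this, Matrix.vecMul_one])
    (by
      apply LinearMap.ext
      intro v
      simp only [LinearMap.comp_apply, Matrix.vecMulLinear_apply, Matrix.vecMul_vecMul,
        LinearMap.id_apply]
      have : ((g⁻¹ : GL (Fin n) F) : Matrix (Fin n) (Fin n) F) *
          (g : Matrix (Fin n) (Fin n) F) = 1 := by
        simp only [Matrix.coe_units_inv]
        exact Matrix.nonsing_inv_mul _ ((Matrix.isUnit_iff_isUnit_det _).mp g.isUnit)
      rw [this, Matrix.vecMul_one])

lemma vecMulEquiv_apply {F : Type*} [Field F] {n : ℕ} (g : GL (Fin n) F) (v : Fin n → F) :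
    vecMulEquiv g v = v ᵥ* ((g⁻¹ : GL (Fin n) F) : Matrix (Fin n) (Fin n) F) := by
  simp [vecMulEquiv]

/-- If `λ Tr₁(A) = Tr₂(A)` then the same relation holds for the base-changed MSC
`B = g A (g⁻¹ ⊗ g⁻¹)`; in particular each of the conditions
`Tr₁, Tr₂` linearly independent; `λ Tr₁ = Tr₂` with both nonzero; `Tr₁ ≠ 0, Tr₂ = 0`;
`Tr₁ = 0, Tr₂ ≠ 0`; `Tr₁ = Tr₂ = 0` is invariant under the base change. -/
theorem trace_relation_invariant {F : Type*} [Field F] {n : ℕ} (hn : 0 < n)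
    (A : Matrix (Fin n) (Fin n × Fin n) F) (lam : F) (g : GL (Fin n) F) :
    let B : Matrix (Fin n) (Fin n × Fin n) F :=
      (g : Matrix (Fin n) (Fin n) F) * A *
        (((g⁻¹ : GL (Fin n) F) : Matrix (Fin n) (Fin n) F) ⊗ₖ
          ((g⁻¹ : GL (Fin n) F) : Matrix (Fin n) (Fin n) F))
    (lam • Tr1 A = Tr2 A → lam • Tr1 B = Tr2 B) ∧
    (LinearIndependent F ![Tr1 A, Tr2 A] ↔ LinearIndependent F ![Tr1 B, Tr2 B]) ∧
    ((lam • Tr1 A = Tr2 A ∧ Tr1 A ≠ 0 ∧ Tr2 A ≠ 0) ↔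
      (lam • Tr1 B = Tr2 B ∧ Tr1 B ≠ 0 ∧ Tr2 B ≠ 0)) ∧
    ((Tr1 A ≠ 0 ∧ Tr2 A = 0) ↔ (Tr1 B ≠ 0 ∧ Tr2 B = 0)) ∧
    ((Tr1 A = 0 ∧ Tr2 A ≠ 0) ↔ (Tr1 B = 0 ∧ Tr2 B ≠ 0)) ∧
    ((Tr1 A = 0 ∧ Tr2 A = 0) ↔ (Tr1 B = 0 ∧ Tr2 B = 0)) := by
  intro B
  set e := vecMulEquiv g with he
  have h1 : Tr1 B = e (Tr1 A) := by rw [vecMulEquiv_apply]; exact tr1_base A g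
  have h2 : Tr2 B = e (Tr2 A) := by rw [vecMulEquiv_apply]; exact tr2_base A g
  have hrel : (lam • Tr1 A = Tr2 A) ↔ (lam • Tr1 B = Tr2 B) := by
    rw [h1, h2, ← _root_.map_smul]
    exact (EquivLike.apply_eq_iff_eq e).symm
  have hz1 : Tr1 A = 0 ↔ Tr1 B = 0 := by rw [h1, LinearEquiv.map_eq_zero_iff]
  have hz2 : Tr2 A = 0 ↔ Tr2 B = 0 := by rw [h2, LinearEquiv.map_eq_zero_iff]
  have hli : LinearIndependent F ![Tr1 A, Tr2 A] ↔ LinearIndependent F ![Tr1 B, Tr2 B] := by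
    have hcomp : ![Tr1 B, Tr2 B] = (e : (Fin n → F) →ₗ[F] (Fin n → F)) ∘ ![Tr1 A, Tr2 A] := by
      funext j
      fin_cases j <;> simp [h1, h2]
    rw [hcomp]
    exact (LinearMap.linearIndependent_iff (e : (Fin n → F) →ₗ[F] (Fin n → F)) e.ker).symm
  refine ⟨hrel.mp, hli, ?_, ?_, ?_, ?_⟩ <;>
    simp only [hrel, ne_eq, hz1, hz2]
end

section
/- Let F be a field with char(F) ≠ 2 and let μ : F² × F² → F² be a nonzero bilinear associative product on F². Then the algebra (F², μ) is isomorphic to one of the following algebras given by their MSCs: As₂¹ = (0,0,0,0; 1,0,0,0), As₂² = (1,0,0,0; 0,0,0,0), As₂³ = (1,0,0,0; 0,1,0,0), As₂⁴ = (1/2,0,0,0; 0,0,1/2,0), or As₂⁵(α₄) = (1/2,0,0,α₄; 0,1/2,1/2,0) for some α₄ ∈ F; i.e. there exist g ∈ GL₂(F) and one of the MSCs B above such that g B = M (g ⊗ g), where M is the MSC of μ. -/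
open Matrix Kronecker

/-- Reinterpret a `2 × 4` matrix as an MSC in `M_{2×2²}(F)`, the four columns being
indexed by the pairs `(1,1),(1,2),(2,1),(2,2)` in lexicographic order. -/
def toMsc2 {F : Type*} [Field F] (M : Matrix (Fin 2) (Fin 4) F) :
    Matrix (Fin 2) (Fin 2 × Fin 2) F :=
  Matrix.of fun i p => M i ⟨(p.2 : ℕ) + 2 * (p.1 : ℕ), by omega⟩

/-!
Split according to whether `μ` has a nonzero idempotent `u`. If it does, complete `u` to a basis
`u, v` and look at the Peirce components of `v` relative to `u`: a nonzero component in
`u V (1 - u)`, `(1 - u) V u` or `(1 - u) V (1 - u)` gives `As₂³`, `As₂⁴` or `As₂²` (or an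
identity element), and if all of them vanish `u` is the identity. A unital algebra is
`As₂⁵(α₄)`: complete the square in the second basis vector, which needs `2 ≠ 0`. Without
nonzero idempotents, some `x` has `x² ∉ F x` (otherwise every square vanishes, which forces
`μ = 0`); writing `x³ = α x + β x²`, both `α ≠ 0` and `β ≠ 0` would produce an idempotent, so
`x³ = 0` and `x, x²` is a basis realising `As₂¹`.
-/

section MatrixForm

variable {F ι : Type*} [Field F] [Fintype ι] [DecidableEq ι]

lemma LinearMap.apply_eq_sum_single (μ : (ι → F) →ₗ[F] (ι → F) →ₗ[F] (ι → F)) (x y : ι → F) :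
    μ x y = ∑ a, ∑ b, (x a * y b) • μ (Pi.single a 1) (Pi.single b 1) := by
  conv_lhs => rw [pi_eq_sum_univ' x, pi_eq_sum_univ' y]
  simp only [map_sum, LinearMap.sum_apply, map_smul, LinearMap.smul_apply, Finset.smul_sum,
    smul_smul]
  rw [Finset.sum_comm]
  simp only [mul_comm (y _)]

lemma msc_mul_kronecker_apply (μ : (ι → F) →ₗ[F] (ι → F) →ₗ[F] (ι → F))
    (g : Matrix ι ι F) (i : ι) (p : ι × ι) :
    ((Matrix.of fun i (p : ι × ι) => μ (Pi.single p.1 1) (Pi.single p.2 1) i) * (g ⊗ₖ g)) i p =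
      μ (g.col p.1) (g.col p.2) i := by
  rw [LinearMap.apply_eq_sum_single μ, Matrix.mul_apply, Fintype.sum_prod_type]
  simp only [Finset.sum_apply, Pi.smul_apply, smul_eq_mul, of_apply, kroneckerMap_apply, col_apply]
  exact Finset.sum_congr rfl fun a _ => Finset.sum_congr rfl fun b _ => by ring

end MatrixForm

open Module

section TwoDimensional

variable {F V : Type*} [Field F] [AddCommGroup V] [Module F V]

/-- For a plane `V`, this says that `(V, μ)` is isomorphic to the algebra with MSC `B`. -/
def HasMsc (μ : V →ₗ[F] V →ₗ[F] V) (B : Matrix (Fin 2) (Fin 4) F) : Prop :=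
  ∃ u w : V, LinearIndependent F ![u, w] ∧
    μ u u = B 0 0 • u + B 1 0 • w ∧ μ u w = B 0 1 • u + B 1 1 • w ∧
    μ w u = B 0 2 • u + B 1 2 • w ∧ μ w w = B 0 3 • u + B 1 3 • w

lemma hasMsc_of_pair {μ : V →ₗ[F] V →ₗ[F] V} {b₁ b₂ b₃ b₄ b₅ b₆ b₇ b₈ : F} {u w : V}
    (h : LinearIndependent F ![u, w])
    (h₁ : μ u u = b₁ • u + b₅ • w) (h₂ : μ u w = b₂ • u + b₆ • w)
    (h₃ : μ w u = b₃ • u + b₇ • w) (h₄ : μ w w = b₄ • u + b₈ • w) :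
    HasMsc μ !![b₁, b₂, b₃, b₄; b₅, b₆, b₇, b₈] :=
  ⟨u, w, h, h₁, h₂, h₃, h₄⟩

lemma LinearIndependent.exists_smul_add_smul_eq (hV : finrank F V = 2) {u w : V}
    (h : LinearIndependent F ![u, w]) (y : V) : ∃ a b : F, a • u + b • w = y := by
  have hspan := h.span_eq_top_of_card_eq_finrank (by simp [hV])
  rw [range_cons_cons_empty] at hspan
  exact Submodule.mem_span_pair.1 (hspan ▸ Submodule.mem_top)

lemma linearIndependent_pair_of_apply_eq_self_of_apply_eq_zero (f : V →ₗ[F] V) {u w : V}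
    (hu : f u = u) (hw : f w = 0) (hu0 : u ≠ 0) (hw0 : w ≠ 0) :
    LinearIndependent F ![u, w] := by
  rw [LinearIndependent.pair_iff' hu0]
  rintro a rfl
  rw [map_smul, hu] at hw
  exact hw0 hw

variable (μ : V →ₗ[F] V →ₗ[F] V)

def IsMulIdentity (e : V) : Prop := ∀ y, μ e y = y ∧ μ y e = y

variable {μ}

lemma isMulIdentity_of_pair (hV : finrank F V = 2) {e u w : V} (h : LinearIndependent F ![u, w])
    (hu : μ e u = u) (hw : μ e w = w) (hu' : μ u e = u) (hw' : μ w e = w) :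
    IsMulIdentity μ e := by
  intro y
  obtain ⟨a, b, rfl⟩ := h.exists_smul_add_smul_eq hV y
  simp [hu, hw, hu', hw']

lemma IsMulIdentity.hasMsc (hchar : (2 : F) ≠ 0) (hV : finrank F V = 2) {e : V}
    (he : IsMulIdentity μ e) : ∃ α₄ : F, HasMsc μ !![1/2, 0, 0, α₄; 0, 1/2, 1/2, 0] := by
  have : Nontrivial V := nontrivial_of_finrank_eq_succ hV
  obtain ⟨y, hy⟩ := exists_ne (0 : V)
  have he0 : e ≠ 0 := by
    rintro rfl
    exact hy (by simpa using ((he y).1).symm)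
  obtain ⟨v, hev⟩ := exists_linearIndependent_pair_of_one_lt_finrank (R := F) (by omega) he0
  obtain ⟨γ, δ, hv⟩ := hev.exists_smul_add_smul_eq hV (μ v v)
  -- completing the square: `z² ∈ F e`
  set z := v - (δ / 2) • e with hz
  have hzz : μ z z = (γ + (δ / 2) ^ 2) • e := by
    simp only [hz, map_sub, map_smul, LinearMap.sub_apply, LinearMap.smul_apply, (he _).1,
      (he _).2, ← hv]
    match_scalars <;> field_simp <;> ring
  have hind : LinearIndependent F ![(1/2 : F) • e, z] := by
    rw [LinearIndependent.pair_iff] at hev ⊢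
    intro s t hst
    obtain ⟨h₁, rfl⟩ := hev (s / 2 - t * δ / 2) t (by rw [← hst]; module)
    refine ⟨?_, rfl⟩
    simpa [hchar] using h₁
  refine ⟨2 * (γ + (δ / 2) ^ 2), hasMsc_of_pair hind ?_ ?_ ?_ ?_⟩
  · simp only [map_smul, LinearMap.smul_apply, (he e).1]
    module
  · simp only [map_smul, LinearMap.smul_apply, (he z).1]
    module
  · simp only [map_smul, (he z).2]
    module
  · rw [hzz]
    match_scalars <;> field_simp
    ring

lemma hasMsc_of_mul_left_eq_self (hassoc : ∀ x y z : V, μ (μ x y) z = μ x (μ y z)) {u w : V}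
    (hu : μ u u = u) (hu0 : u ≠ 0) (huw : μ u w = w) (hwu : μ w u = 0) (hw0 : w ≠ 0) :
    HasMsc μ !![1, 0, 0, 0; 0, 1, 0, 0] := by
  have hww : μ w w = 0 := by
    have h := hassoc w u w
    rwa [hwu, huw, map_zero, LinearMap.zero_apply, eq_comm] at h
  exact hasMsc_of_pair
    (linearIndependent_pair_of_apply_eq_self_of_apply_eq_zero (μ.flip u) hu hwu hu0 hw0)
    (by simp [hu]) (by simp [huw]) (by simp [hwu]) (by simp [hww])

lemma hasMsc_of_mul_right_eq_self (hassoc : ∀ x y z : V, μ (μ x y) z = μ x (μ y z))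
    (hchar : (2 : F) ≠ 0) {u w : V} (hu : μ u u = u) (hu0 : u ≠ 0) (huw : μ u w = 0)
    (hwu : μ w u = w) (hw0 : w ≠ 0) :
    HasMsc μ !![1/2, 0, 0, 0; 0, 0, 1/2, 0] := by
  have hww : μ w w = 0 := by
    have h := hassoc w u w
    rwa [hwu, huw, map_zero] at h
  have hind : LinearIndependent F ![(1/2 : F) • u, w] :=
    linearIndependent_pair_of_apply_eq_self_of_apply_eq_zero (μ u) (by simp [hu]) huw
      (by simp [hchar, hu0]) hw0
  refine hasMsc_of_pair hind ?_ (by simp [huw]) ?_ (by simp [hww])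
  · simp only [map_smul, LinearMap.smul_apply, hu]
    module
  · simp only [map_smul, hwu]
    module

lemma hasMsc_or_isMulIdentity_of_mul_eq_zero (hassoc : ∀ x y z : V, μ (μ x y) z = μ x (μ y z))
    (hV : finrank F V = 2) {u w : V} (hu : μ u u = u) (hu0 : u ≠ 0) (huw : μ u w = 0)
    (hwu : μ w u = 0) (hw0 : w ≠ 0) :
    HasMsc μ !![1, 0, 0, 0; 0, 0, 0, 0] ∨ ∃ e, IsMulIdentity μ e := by
  have hind := linearIndependent_pair_of_apply_eq_self_of_apply_eq_zero (μ u) hu huw hu0 hw0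
  obtain ⟨a, b, hab⟩ := hind.exists_smul_add_smul_eq hV (μ w w)
  have hww : μ w w = b • w := by
    have h : μ u (μ w w) = 0 := by rw [← hassoc, huw, map_zero, LinearMap.zero_apply]
    rw [← hab] at h ⊢
    simp only [map_add, map_smul, hu, huw, smul_zero, add_zero, smul_eq_zero, hu0, or_false] at h
    simp [h]
  rcases eq_or_ne b 0 with rfl | hb
  · exact .inl (hasMsc_of_pair hind (by simp [hu]) (by simp [huw]) (by simp [hwu]) (by simp [hww]))
  · refine .inr ⟨u + b⁻¹ • w, isMulIdentity_of_pair hV hind ?_ ?_ ?_ ?_⟩ <;>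
      simp [hu, huw, hwu, hww, smul_smul, hb]

theorem hasMsc_of_idempotent (hassoc : ∀ x y z : V, μ (μ x y) z = μ x (μ y z))
    (hchar : (2 : F) ≠ 0) (hV : finrank F V = 2) {u : V} (hu : μ u u = u) (hu0 : u ≠ 0) :
    HasMsc μ !![1, 0, 0, 0; 0, 0, 0, 0] ∨ HasMsc μ !![1, 0, 0, 0; 0, 1, 0, 0] ∨
      HasMsc μ !![1/2, 0, 0, 0; 0, 0, 1/2, 0] ∨
      ∃ α₄ : F, HasMsc μ !![1/2, 0, 0, α₄; 0, 1/2, 1/2, 0] := by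
  have huu : ∀ x, μ u (μ u x) = μ u x := fun x => by rw [← hassoc, hu]
  obtain ⟨v, huv⟩ := exists_linearIndependent_pair_of_one_lt_finrank (R := F) (by omega) hu0
  -- the Peirce components `u v (1 - u)`, `(1 - u) v u`, `(1 - u) v (1 - u)` of `v` in turn;
  -- the last one is `v - u v` once the first two vanish
  by_cases h₁₀ : μ u v - μ u (μ v u) = 0
  swap
  · exact .inr <| .inl <| hasMsc_of_mul_left_eq_self hassoc hu hu0
      (by simp [huu]) (by simp [hassoc, hu]) h₁₀
  by_cases h₀₁ : μ v u - μ u (μ v u) = 0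
  swap
  · exact .inr <| .inr <| .inl <| hasMsc_of_mul_right_eq_self hassoc hchar hu hu0
      (by simp [huu]) (by simp [hassoc, hu]) h₀₁
  by_cases h₀₀ : v - μ u v = 0
  swap
  · rcases hasMsc_or_isMulIdentity_of_mul_eq_zero hassoc hV hu hu0
      (by simp [huu]) (by simpa [hassoc, hu] using h₀₁) h₀₀ with h | ⟨e, he⟩
    · exact .inl h
    · exact .inr <| .inr <| .inr <| he.hasMsc hchar hV
  rw [sub_eq_zero] at h₁₀ h₀₁ h₀₀
  exact .inr <| .inr <| .inr <| IsMulIdentity.hasMsc hchar hV <|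
    isMulIdentity_of_pair hV huv hu h₀₀.symm hu (by rw [h₀₁, ← h₁₀, ← h₀₀])

lemma eq_zero_of_forall_mul_self_eq_zero (hassoc : ∀ x y z : V, μ (μ x y) z = μ x (μ y z))
    (hV : finrank F V = 2) (h : ∀ x, μ x x = 0) : μ = 0 := by
  refine LinearMap.ext₂ fun x y => ?_
  rw [LinearMap.zero_apply, LinearMap.zero_apply]
  by_cases hx : x = 0
  · simp [hx]
  by_cases hxy : LinearIndependent F ![x, y]
  · obtain ⟨a, b, hab⟩ := hxy.exists_smul_add_smul_eq hV (μ x y)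
    -- `x (x y) = (x x) y = 0` and `(x y) y = x (y y) = 0`
    have hb : b • μ x y = 0 := by
      calc b • μ x y = μ x (a • x + b • y) := by simp [h]
        _ = 0 := by rw [hab, ← hassoc, h, map_zero, LinearMap.zero_apply]
    have ha : a • μ x y = 0 := by
      calc a • μ x y = μ (a • x + b • y) y := by simp [h]
        _ = 0 := by rw [hab, hassoc, h, map_zero]
    by_contra hxy0
    rw [smul_eq_zero_iff_left hxy0] at ha hb
    rw [ha, hb, zero_smul, zero_smul, add_zero] at hab
    exact hxy0 hab.symm
  · obtain ⟨a, rfl⟩ : ∃ a : F, a • x = y := by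
      simpa [LinearIndependent.pair_iff' hx] using hxy
    simp [h]

lemma exists_linearIndependent_mul_self (hassoc : ∀ x y z : V, μ (μ x y) z = μ x (μ y z))
    (hV : finrank F V = 2) (hμ : μ ≠ 0) (hidem : ∀ u, μ u u = u → u = 0) :
    ∃ x, LinearIndependent F ![x, μ x x] := by
  by_contra! hdep
  refine hμ (eq_zero_of_forall_mul_self_eq_zero hassoc hV fun x => ?_)
  by_cases hx : x = 0
  · simp [hx]
  obtain ⟨a, ha⟩ : ∃ a : F, a • x = μ x x := by
    simpa [LinearIndependent.pair_iff' hx] using hdep x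
  obtain rfl : a = 0 := by
    by_contra ha0
    refine hx ((smul_eq_zero_iff_right (inv_ne_zero ha0)).1 (hidem _ ?_))
    simp [← ha, smul_smul, ha0]
  simp [← ha]

lemma mul_mul_self_eq_zero_of_forall_idempotent_eq_zero
    (hassoc : ∀ x y z : V, μ (μ x y) z = μ x (μ y z)) (hV : finrank F V = 2)
    (hidem : ∀ u, μ u u = u → u = 0) {x : V} (hx : LinearIndependent F ![x, μ x x]) :
    μ x (μ x x) = 0 := by
  obtain ⟨α, β, hcube⟩ := hx.exists_smul_add_smul_eq hV (μ x (μ x x))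
  have hsq : μ (μ x x) (μ x x) = α • μ x x + β • μ x (μ x x) := by
    rw [hassoc, ← congrArg (μ x) hcube, map_add, map_smul, map_smul]
  obtain rfl : α = 0 := by
    by_contra hα
    -- `α⁻¹ (x² - β x)` is a left identity on `x` and `x²`, hence a nonzero idempotent
    obtain ⟨e, he⟩ : ∃ e, e = α⁻¹ • (μ x x - β • x) := ⟨_, rfl⟩
    have hex : μ e x = x := by
      simp only [he, map_smul, map_sub, LinearMap.smul_apply, LinearMap.sub_apply, hassoc,
        ← hcube]
      match_scalars <;> simp [hα]
    have hexx : μ e (μ x x) = μ x x := by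
      simp only [he, map_smul, map_sub, LinearMap.smul_apply, LinearMap.sub_apply, hsq]
      match_scalars <;> simp [hα]
    have hee : μ e e = e :=
      calc μ e e = μ e (α⁻¹ • (μ x x - β • x)) := by rw [← he]
        _ = e := by rw [map_smul, map_sub, map_smul, hex, hexx, he]
    exact hx.ne_zero 0 (by simpa [hex] using congrArg (μ · x) (hidem e hee))
  rw [zero_smul, zero_add] at hcube hsq
  obtain rfl : β = 0 := by
    by_contra hβ
    -- `β⁻² x²` would be a nonzero idempotent
    have hxx0 : μ x x ≠ 0 := hx.ne_zero 1
    refine hxx0 ((smul_eq_zero_iff_right (pow_ne_zero 2 (inv_ne_zero hβ))).1 (hidem _ ?_))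
    simp only [map_smul, LinearMap.smul_apply, hsq, ← hcube]
    match_scalars
    field_simp
  simpa using hcube.symm

lemma hasMsc_of_forall_idempotent_eq_zero (hassoc : ∀ x y z : V, μ (μ x y) z = μ x (μ y z))
    (hV : finrank F V = 2) (hμ : μ ≠ 0) (hidem : ∀ u, μ u u = u → u = 0) :
    HasMsc μ !![0, 0, 0, 0; 1, 0, 0, 0] := by
  obtain ⟨x, hx⟩ := exists_linearIndependent_mul_self hassoc hV hμ hidem
  have hcube := mul_mul_self_eq_zero_of_forall_idempotent_eq_zero hassoc hV hidem hx
  exact hasMsc_of_pair hx (by simp) (by simp [hcube]) (by simp [hassoc, hcube])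
    (by simp [hassoc, hcube])

theorem hasMsc_of_assoc (hchar : (2 : F) ≠ 0) (hV : finrank F V = 2) (hμ : μ ≠ 0)
    (hassoc : ∀ x y z : V, μ (μ x y) z = μ x (μ y z)) :
    HasMsc μ !![0, 0, 0, 0; 1, 0, 0, 0] ∨ HasMsc μ !![1, 0, 0, 0; 0, 0, 0, 0] ∨
      HasMsc μ !![1, 0, 0, 0; 0, 1, 0, 0] ∨ HasMsc μ !![1/2, 0, 0, 0; 0, 0, 1/2, 0] ∨
      ∃ α₄ : F, HasMsc μ !![1/2, 0, 0, α₄; 0, 1/2, 1/2, 0] := by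
  by_cases hidem : ∀ u, μ u u = u → u = 0
  · exact .inl (hasMsc_of_forall_idempotent_eq_zero hassoc hV hμ hidem)
  · push Not at hidem
    obtain ⟨u, hu, hu0⟩ := hidem
    exact .inr (hasMsc_of_idempotent hassoc hchar hV hu hu0)

end TwoDimensional

lemma HasMsc.exists_isUnit_mul_toMsc2_eq {F : Type*} [Field F]
    {μ : (Fin 2 → F) →ₗ[F] (Fin 2 → F) →ₗ[F] (Fin 2 → F)} {B : Matrix (Fin 2) (Fin 4) F}
    (h : HasMsc μ B) :
    ∃ g : Matrix (Fin 2) (Fin 2) F, IsUnit g ∧ g * toMsc2 B =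
      (Matrix.of fun i p => μ (Pi.single p.1 1) (Pi.single p.2 1) i) * (g ⊗ₖ g) := by
  obtain ⟨u, w, hind, h₁, h₂, h₃, h₄⟩ := h
  refine ⟨(Matrix.of ![u, w])ᵀ, linearIndependent_cols_iff_isUnit.1 hind, ?_⟩
  refine Matrix.ext fun i p => Eq.trans ?_ (msc_mul_kronecker_apply μ _ i p).symm
  obtain ⟨p, q⟩ := p
  fin_cases p <;> fin_cases q <;> simp [Matrix.mul_apply, toMsc2, h₁, h₂, h₃, h₄, mul_comm]

/-- Every nonzero bilinear associative product `μ` on `F²` (`char F ≠ 2`) is isomorphic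
to one of the algebras `As₂¹, As₂², As₂³, As₂⁴, As₂⁵(α₄)` given by their MSCs:
there are `g ∈ GL₂(F)` and a canonical MSC `B` with `g B = M (g ⊗ g)`, where `M`
is the MSC of `μ`. -/
theorem two_dim_associative_classification {F : Type*} [Field F] (hchar : (2 : F) ≠ 0)
    (μ : (Fin 2 → F) →ₗ[F] (Fin 2 → F) →ₗ[F] (Fin 2 → F)) (hμ : μ ≠ 0)
    (hassoc : ∀ x y z : Fin 2 → F, μ (μ x y) z = μ x (μ y z)) :
    let M : Matrix (Fin 2) (Fin 2 × Fin 2) F :=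
      Matrix.of fun i p => μ (Pi.single p.1 1) (Pi.single p.2 1) i
    ∃ g : Matrix (Fin 2) (Fin 2) F, IsUnit g ∧
      (g * toMsc2 (F := F) !![0,0,0,0; 1,0,0,0] = M * (g ⊗ₖ g) ∨
       g * toMsc2 (F := F) !![1,0,0,0; 0,0,0,0] = M * (g ⊗ₖ g) ∨
       g * toMsc2 (F := F) !![1,0,0,0; 0,1,0,0] = M * (g ⊗ₖ g) ∨
       g * toMsc2 (F := F) !![1/2,0,0,0; 0,0,1/2,0] = M * (g ⊗ₖ g) ∨
       ∃ α₄ : F, g * toMsc2 (F := F) !![1/2,0,0,α₄; 0,1/2,1/2,0] = M * (g ⊗ₖ g)) := by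
  intro M
  rcases hasMsc_of_assoc hchar (Module.finrank_fin_fun F) hμ hassoc with h | h | h | h | ⟨α₄, h⟩ <;>
    obtain ⟨g, hg, hgB⟩ := h.exists_isUnit_mul_toMsc2_eq <;> refine ⟨g, hg, ?_⟩
  exacts [.inl hgB, .inr (.inl hgB), .inr (.inr (.inl hgB)), .inr (.inr (.inr (.inl hgB))),
    .inr (.inr (.inr (.inr ⟨α₄, hgB⟩)))]
end

section
/- Let F be a field with char(F) ≠ 2. The two-dimensional algebras with MSCs As₂¹ = (0,0,0,0; 1,0,0,0), As₂² = (1,0,0,0; 0,0,0,0), As₂³ = (1,0,0,0; 0,1,0,0), As₂⁴ = (1/2,0,0,0; 0,0,1/2,0) and As₂⁵(α₄) = (1/2,0,0,α₄; 0,1/2,1/2,0) (for any α₄ ∈ F) are pairwise non-isomorphic: no algebra from one of these five items is isomorphic to an algebra from a different item. -/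
/-!
An isomorphism `g` intertwines the products (`g (x ·_B y) = g x ·_A g y`), so commutativity,
the existence of a left identity and `A · A² = 0` are isomorphism invariants. On
`As₂¹, …, As₂⁵` these three properties take the five distinct values (yes, no, yes),
(yes, no, no), (no, yes, no), (no, no, no), (yes, yes, no); `char F ≠ 2` is what keeps the
halves in `As₂⁴` and `As₂⁵` from vanishing.
-/

open Matrix Kronecker

/-- The five items of the classification list of two-dimensional associative algebras:
`As₂¹, As₂², As₂³, As₂⁴` and the family `As₂⁵(α₄)` (the parameter is ignored by
the first four items). -/
def item2 {F : Type*} [Field F] (k : Fin 5) (α₄ : F) :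
    Matrix (Fin 2) (Fin 2 × Fin 2) F :=
  ![toMsc2 !![0,0,0,0; 1,0,0,0],
    toMsc2 !![1,0,0,0; 0,0,0,0],
    toMsc2 !![1,0,0,0; 0,1,0,0],
    toMsc2 !![1/2,0,0,0; 0,0,1/2,0],
    toMsc2 !![1/2,0,0,α₄; 0,1/2,1/2,0]] k

namespace Msc

variable {R ι : Type*} [CommRing R] [Fintype ι]

def mul (M : Matrix ι (ι × ι) R) (x y : ι → R) : ι → R :=
  M *ᵥ fun p => x p.1 * y p.2

def IsComm (M : Matrix ι (ι × ι) R) : Prop :=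
  ∀ x y, mul M x y = mul M y x

def HasLeftOne (M : Matrix ι (ι × ι) R) : Prop :=
  ∃ e, ∀ x, mul M e x = x

def CubeZero (M : Matrix ι (ι × ι) R) : Prop :=
  ∀ x y z, mul M x (mul M y z) = 0

theorem kronecker_mulVec_mul (g : Matrix ι ι R) (x y : ι → R) :
    (g ⊗ₖ g) *ᵥ (fun p => x p.1 * y p.2) = fun p => (g *ᵥ x) p.1 * (g *ᵥ y) p.2 := by
  ext p
  simp only [mulVec, dotProduct, Fintype.sum_prod_type, kroneckerMap_apply, Finset.sum_mul_sum]
  exact Finset.sum_congr rfl fun i _ => Finset.sum_congr rfl fun j _ => mul_mul_mul_comm ..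

theorem mulVec_mul_of_mul_eq {g : Matrix ι ι R} {A B : Matrix ι (ι × ι) R}
    (h : g * B = A * (g ⊗ₖ g)) (x y : ι → R) :
    g *ᵥ mul B x y = mul A (g *ᵥ x) (g *ᵥ y) := by
  rw [mul, mul, mulVec_mulVec, h, ← mulVec_mulVec, kronecker_mulVec_mul]

section congr

variable {A B : Matrix ι (ι × ι) R} (φ : (ι → R) ≃ₗ[R] (ι → R))

theorem isComm_congr (hφ : ∀ x y, φ (mul B x y) = mul A (φ x) (φ y)) :
    IsComm A ↔ IsComm B := by
  unfold IsComm
  rw [φ.surjective.forall₂]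
  exact forall₂_congr fun x y => by rw [← hφ, ← hφ, φ.injective.eq_iff]

theorem hasLeftOne_congr (hφ : ∀ x y, φ (mul B x y) = mul A (φ x) (φ y)) :
    HasLeftOne A ↔ HasLeftOne B := by
  unfold HasLeftOne
  rw [φ.surjective.exists]
  refine exists_congr fun e => ?_
  rw [φ.surjective.forall]
  exact forall_congr' fun x => by rw [← hφ, φ.injective.eq_iff]

theorem cubeZero_congr (hφ : ∀ x y, φ (mul B x y) = mul A (φ x) (φ y)) :
    CubeZero A ↔ CubeZero B := by
  unfold CubeZero
  rw [φ.surjective.forall₃]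
  exact forall₃_congr fun x y z => by rw [← hφ, ← hφ, φ.map_eq_zero_iff]

end congr

theorem exists_linearEquiv_map_mul [DecidableEq ι] {g : Matrix ι ι R}
    {A B : Matrix ι (ι × ι) R} (hg : IsUnit g) (h : g * B = A * (g ⊗ₖ g)) :
    ∃ φ : (ι → R) ≃ₗ[R] (ι → R), ∀ x y, φ (mul B x y) = mul A (φ x) (φ y) :=
  ⟨.ofBijective g.mulVecLin
      ⟨mulVec_injective_of_isUnit hg, mulVec_surjective_iff_isUnit.2 hg⟩,
    mulVec_mul_of_mul_eq h⟩

section item2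

variable {F : Type*} [Field F] (α : F) (x y : Fin 2 → F)

theorem mul_toMsc2 (M : Matrix (Fin 2) (Fin 4) F) :
    mul (toMsc2 M) x y = fun i =>
      M i 0 * (x 0 * y 0) + M i 1 * (x 0 * y 1) + M i 2 * (x 1 * y 0) + M i 3 * (x 1 * y 1) := by
  ext i
  simp [mul, toMsc2, mulVec, dotProduct, Fintype.sum_prod_type, Fin.sum_univ_two, add_assoc]

theorem mul_item2_zero : mul (item2 0 α) x y = ![0, x 0 * y 0] := by
  ext i; fin_cases i <;> simp [item2, mul_toMsc2]

theorem mul_item2_one : mul (item2 1 α) x y = ![x 0 * y 0, 0] := by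
  ext i; fin_cases i <;> simp [item2, mul_toMsc2]

theorem mul_item2_two : mul (item2 2 α) x y = ![x 0 * y 0, x 0 * y 1] := by
  ext i; fin_cases i <;> simp [item2, mul_toMsc2]

theorem mul_item2_three : mul (item2 3 α) x y = ![x 0 * y 0 / 2, x 1 * y 0 / 2] := by
  ext i; fin_cases i <;> simp [item2, mul_toMsc2] <;> ring

theorem mul_item2_four :
    mul (item2 4 α) x y = ![x 0 * y 0 / 2 + α * (x 1 * y 1), (x 0 * y 1 + x 1 * y 0) / 2] := by
  ext i; fin_cases i <;> simp [item2, mul_toMsc2] <;> ring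

variable {α}

theorem isComm_item2_iff (hchar : (2 : F) ≠ 0) (k : Fin 5) :
    IsComm (item2 k α) ↔ k ≠ 2 ∧ k ≠ 3 := by
  match k with
  | 0 => exact iff_of_true (fun x y => by rw [mul_item2_zero, mul_item2_zero, mul_comm]) (by decide)
  | 1 => exact iff_of_true (fun x y => by rw [mul_item2_one, mul_item2_one, mul_comm]) (by decide)
  | 2 =>
    refine iff_of_false (fun h => ?_) (by decide)
    simpa [mul_item2_two] using congrFun (h ![1, 0] ![0, 1]) 1
  | 3 =>
    refine iff_of_false (fun h => ?_) (by decide)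
    simpa [mul_item2_three, hchar] using congrFun (h ![0, 1] ![1, 0]) 1
  | 4 =>
    refine iff_of_true (fun x y => ?_) (by decide)
    simp only [mul_item2_four, mul_comm, add_comm]

theorem hasLeftOne_item2_iff (hchar : (2 : F) ≠ 0) (k : Fin 5) :
    HasLeftOne (item2 k α) ↔ k = 2 ∨ k = 4 := by
  match k with
  | 0 =>
    refine iff_of_false (fun ⟨e, he⟩ => ?_) (by decide)
    simpa [mul_item2_zero] using congrFun (he ![1, 0]) 0
  | 1 =>
    refine iff_of_false (fun ⟨e, he⟩ => ?_) (by decide)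
    simpa [mul_item2_one] using congrFun (he ![0, 1]) 1
  | 2 =>
    refine iff_of_true ⟨![1, 0], fun x => ?_⟩ (by decide)
    ext i; fin_cases i <;> simp [mul_item2_two]
  | 3 =>
    refine iff_of_false (fun ⟨e, he⟩ => ?_) (by decide)
    simpa [mul_item2_three] using congrFun (he ![0, 1]) 1
  | 4 =>
    refine iff_of_true ⟨![2, 0], fun x => ?_⟩ (by decide)
    ext i; fin_cases i <;> simp [mul_item2_four] <;> field_simp

theorem cubeZero_item2_iff (hchar : (2 : F) ≠ 0) (k : Fin 5) :
    CubeZero (item2 k α) ↔ k = 0 := by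
  match k with
  | 0 => exact iff_of_true (fun x y z => by simp [mul_item2_zero]) rfl
  | 1 | 2 | 3 | 4 =>
    refine iff_of_false (fun h => ?_) (by decide)
    have h := congrFun (h ![1, 0] ![1, 0] ![1, 0]) 0
    simp [mul_item2_one, mul_item2_two, mul_item2_three, mul_item2_four, hchar] at h

theorem eq_of_item2_invariants_iff (hchar : (2 : F) ≠ 0) {k l : Fin 5} {β : F}
    (hcomm : IsComm (item2 k α) ↔ IsComm (item2 l β))
    (hone : HasLeftOne (item2 k α) ↔ HasLeftOne (item2 l β))
    (hcube : CubeZero (item2 k α) ↔ CubeZero (item2 l β)) : k = l := by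
  rw [isComm_item2_iff hchar, isComm_item2_iff hchar] at hcomm
  rw [hasLeftOne_item2_iff hchar, hasLeftOne_item2_iff hchar] at hone
  rw [cubeZero_item2_iff hchar, cubeZero_item2_iff hchar] at hcube
  revert k l
  decide

end item2

end Msc

/-- Over a field of characteristic `≠ 2`, the algebras
`As₂¹, As₂², As₂³, As₂⁴, As₂⁵(α₄)` are pairwise non-isomorphic: no algebra from one
of the five items is isomorphic to an algebra from a different item. -/
theorem two_dim_list_pairwise_nonisomorphic {F : Type*} [Field F] (hchar : (2 : F) ≠ 0)
    (k l : Fin 5) (α β : F) (hkl : k ≠ l) :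
    ¬ ∃ g : Matrix (Fin 2) (Fin 2) F, IsUnit g ∧
        g * item2 l β = item2 k α * (g ⊗ₖ g) := by
  rintro ⟨g, hg, h⟩
  obtain ⟨φ, hφ⟩ := Msc.exists_linearEquiv_map_mul hg h
  exact hkl (Msc.eq_of_item2_invariants_iff hchar (Msc.isComm_congr φ hφ)
    (Msc.hasLeftOne_congr φ hφ) (Msc.cubeZero_congr φ hφ))
end

section
/- Let F be a field with char(F) ≠ 2, α₄ ∈ F, and a ∈ F with a ≠ 0. Then the two-dimensional algebras with MSCs As₂⁵(α₄) = (1/2,0,0,α₄; 0,1/2,1/2,0) and As₂⁵(a²α₄) = (1/2,0,0,a²α₄; 0,1/2,1/2,0) are isomorphic: there exists g ∈ GL₂(F) with g·As₂⁵(a²α₄) = As₂⁵(α₄)·(g ⊗ g). -/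
open Matrix Kronecker

/-- For `char F ≠ 2`, `α₄ ∈ F` and `0 ≠ a ∈ F`, the algebras `As₂⁵(α₄)` and
`As₂⁵(a²α₄)` are isomorphic. -/
theorem As25_param_isomorphic {F : Type*} [Field F] (hchar : (2 : F) ≠ 0)
    (α₄ : F) (a : F) (ha : a ≠ 0) :
    ∃ g : Matrix (Fin 2) (Fin 2) F, IsUnit g ∧
      g * toMsc2 !![1/2,0,0,a^2*α₄; 0,1/2,1/2,0] =
        toMsc2 !![1/2,0,0,α₄; 0,1/2,1/2,0] * (g ⊗ₖ g) := by
  refine ⟨!![1,0;0,a], ?_, ?_⟩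
  · rw [Matrix.isUnit_iff_isUnit_det]
    simp [Matrix.det_fin_two, ha]
  · ext i p
    obtain ⟨p1, p2⟩ := p
    fin_cases i <;> fin_cases p1 <;> fin_cases p2 <;>
      simp [toMsc2, Matrix.mul_apply, kroneckerMap_apply, Fintype.sum_prod_type, Fin.sum_univ_two] <;> ring
end

section
/- Let F be a field with char(F) ∉ {2,3}, t ∈ F, and a ∈ F with a ≠ 0. Then the three-dimensional algebras with MSCs As₁,₁²(3)(t), with rows (1,0,0,0,t,0,0,0,0), (0,1,0,1,0,0,0,0,0), (0,0,0,0,0,0,0,0,1), and As₁,₁²(3)(a²t), with rows (1,0,0,0,a²t,0,0,0,0), (0,1,0,1,0,0,0,0,0), (0,0,0,0,0,0,0,0,1), are isomorphic: there exists g ∈ GL₃(F) with g·As₁,₁²(3)(a²t) = As₁,₁²(3)(t)·(g ⊗ g). -/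
open Matrix Kronecker

/-- Reinterpret a `3 × 9` matrix as an MSC in `M_{3×3²}(F)`, the nine columns being
indexed by the pairs `(1,1),(1,2),(1,3),(2,1),(2,2),(2,3),(3,1),(3,2),(3,3)`
in lexicographic order. -/
def toMsc3 {F : Type*} [Field F] (M : Matrix (Fin 3) (Fin 9) F) :
    Matrix (Fin 3) (Fin 3 × Fin 3) F :=
  Matrix.of fun i p => M i ⟨(p.2 : ℕ) + 3 * (p.1 : ℕ), by omega⟩

section aux
variable {α : Type*} (x0 x1 x2 x3 x4 x5 x6 x7 x8 : α)

lemma vec9_val0 : ![x0,x1,x2,x3,x4,x5,x6,x7,x8] (0 : Fin 9) = x0 := rfl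
lemma vec9_val1 : ![x0,x1,x2,x3,x4,x5,x6,x7,x8] (1 : Fin 9) = x1 := rfl
lemma vec9_val2 : ![x0,x1,x2,x3,x4,x5,x6,x7,x8] (2 : Fin 9) = x2 := rfl
lemma vec9_val3 : ![x0,x1,x2,x3,x4,x5,x6,x7,x8] (3 : Fin 9) = x3 := rfl
lemma vec9_val4 : ![x0,x1,x2,x3,x4,x5,x6,x7,x8] (4 : Fin 9) = x4 := rfl
lemma vec9_val5 : ![x0,x1,x2,x3,x4,x5,x6,x7,x8] (5 : Fin 9) = x5 := rfl
lemma vec9_val6 : ![x0,x1,x2,x3,x4,x5,x6,x7,x8] (6 : Fin 9) = x6 := rfl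
lemma vec9_val7 : ![x0,x1,x2,x3,x4,x5,x6,x7,x8] (7 : Fin 9) = x7 := rfl
lemma vec9_val8 : ![x0,x1,x2,x3,x4,x5,x6,x7,x8] (8 : Fin 9) = x8 := rfl

end aux

set_option maxHeartbeats 2000000 in
/-- Over a field of characteristic `≠ 2, 3`, for `t ∈ F` and `0 ≠ a ∈ F`, the algebras
`As₁,₁²(3)(t)` and `As₁,₁²(3)(a²t)` are isomorphic. -/
theorem As112_param_isomorphic {F : Type*} [Field F]
    (h2 : (2 : F) ≠ 0) (h3 : (3 : F) ≠ 0) (t : F) (a : F) (ha : a ≠ 0) :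
    ∃ g : Matrix (Fin 3) (Fin 3) F, IsUnit g ∧
      g * toMsc3 (F := F)
          !![1,0,0,0,a^2*t,0,0,0,0; 0,1,0,1,0,0,0,0,0; 0,0,0,0,0,0,0,0,1] =
        toMsc3 (F := F)
          !![1,0,0,0,t,0,0,0,0; 0,1,0,1,0,0,0,0,0; 0,0,0,0,0,0,0,0,1] * (g ⊗ₖ g) := by
  refine ⟨Matrix.diagonal ![1, a, 1], ?_, ?_⟩
  · rw [Matrix.isUnit_iff_isUnit_det, Matrix.det_diagonal]
    simp [Fin.prod_univ_three, ha]
  · ext i p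
    obtain ⟨p1, p2⟩ := p
    fin_cases i <;> fin_cases p1 <;> fin_cases p2 <;>
      simp [toMsc3, Matrix.mul_apply, Matrix.kroneckerMap_apply, Fin.sum_univ_three,
        Fintype.sum_prod_type, Matrix.diagonal, vec9_val0, vec9_val1, vec9_val2,
        vec9_val3, vec9_val4, vec9_val5, vec9_val6, vec9_val7, vec9_val8, Matrix.vecHead, Matrix.vecTail] <;>
      ring_nf
end

section
/- Let F be a field with char(F) ∉ {2,3} and t ∈ F. Then the three-dimensional algebras with MSCs As₁,₁¹⁴(3)(t), with rows (0,0,0,0,0,0,0,0,1), (0,0,0,0,0,1,0,1,t), (0,0,0,0,0,0,0,0,1), and As₁,₁¹⁴(3)(−t), with rows (0,0,0,0,0,0,0,0,1), (0,0,0,0,0,1,0,1,−t), (0,0,0,0,0,0,0,0,1), are isomorphic: there exists g ∈ GL₃(F) with g·As₁,₁¹⁴(3)(−t) = As₁,₁¹⁴(3)(t)·(g ⊗ g). -/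
/-!
The isomorphism is the sign change `e₂ ↦ -e₂`: it preserves `e₂e₃ = e₃e₂ = e₂` and the products
in which `e₂` does not occur, and flips the sign of the `e₂`-coordinate `t` of `e₃e₃`.
-/

open Matrix Kronecker

theorem Matrix.diagonal_mul_eq_mul_kronecker_diagonal_iff {n R : Type*} [Fintype n]
    [DecidableEq n] [CommSemiring R] (d : n → R) (A B : Matrix n (n × n) R) :
    diagonal d * A = B * (diagonal d ⊗ₖ diagonal d) ↔
      ∀ i p q, d i * A i (p, q) = B i (p, q) * (d p * d q) := by
  simp only [diagonal_kronecker_diagonal, ← Matrix.ext_iff, diagonal_mul, mul_diagonal,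
    Prod.forall]

theorem As1114_param_isomorphic_general {F : Type*} [Field F]
    (t : F) :
    ∃ g : Matrix (Fin 3) (Fin 3) F, IsUnit g ∧
      g * toMsc3 (F := F)
          !![0,0,0,0,0,0,0,0,1; 0,0,0,0,0,1,0,1,-t; 0,0,0,0,0,0,0,0,1] =
        toMsc3 (F := F)
          !![0,0,0,0,0,0,0,0,1; 0,0,0,0,0,1,0,1,t; 0,0,0,0,0,0,0,0,1] * (g ⊗ₖ g) := by
  refine ⟨diagonal ![1, -1, 1], ?_, ?_⟩
  · rw [isUnit_diagonal, Pi.isUnit_iff]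
    intro i
    fin_cases i <;> simp
  · rw [diagonal_mul_eq_mul_kronecker_diagonal_iff]
    intro i p q
    fin_cases i <;> fin_cases p <;> fin_cases q <;> simp [toMsc3]

/-- Over a field of characteristic `≠ 2, 3`, for `t ∈ F`, the algebras
`As₁,₁¹⁴(3)(t)` and `As₁,₁¹⁴(3)(−t)` are isomorphic. -/
theorem As1114_param_isomorphic {F : Type*} [Field F]
    (h2 : (2 : F) ≠ 0) (h3 : (3 : F) ≠ 0) (t : F) :
    ∃ g : Matrix (Fin 3) (Fin 3) F, IsUnit g ∧
      g * toMsc3 (F := F)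
          !![0,0,0,0,0,0,0,0,1; 0,0,0,0,0,1,0,1,-t; 0,0,0,0,0,0,0,0,1] =
        toMsc3 (F := F)
          !![0,0,0,0,0,0,0,0,1; 0,0,0,0,0,1,0,1,t; 0,0,0,0,0,0,0,0,1] * (g ⊗ₖ g) :=
  As1114_param_isomorphic_general t
end

section
/- Let F be a field with char(F) ∉ {2,3}, t ∈ F, and a ∈ F with a ≠ 0. Then the three-dimensional algebras with MSCs As₁,₁¹⁷(3)(t), with rows (0,0,t,0,t,0,t,0,0), (1,0,0,0,0,t,0,t,0), (0,1,0,1,0,0,0,0,t), and As₁,₁¹⁷(3)(a³t), with rows (0,0,a³t,0,a³t,0,a³t,0,0), (1,0,0,0,0,a³t,0,a³t,0), (0,1,0,1,0,0,0,0,a³t), are isomorphic: there exists g ∈ GL₃(F) with g·As₁,₁¹⁷(3)(a³t) = As₁,₁¹⁷(3)(t)·(g ⊗ g). -/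
open Matrix Kronecker

section Aux
variable {F : Type*} [Field F]

lemma vec9_3 (x0 x1 x2 x3 x4 x5 x6 x7 x8 : F) : ![x0,x1,x2,x3,x4,x5,x6,x7,x8] 3 = x3 := rfl
lemma vec9_4 (x0 x1 x2 x3 x4 x5 x6 x7 x8 : F) : ![x0,x1,x2,x3,x4,x5,x6,x7,x8] 4 = x4 := rfl
lemma vec9_5 (x0 x1 x2 x3 x4 x5 x6 x7 x8 : F) : ![x0,x1,x2,x3,x4,x5,x6,x7,x8] 5 = x5 := rfl
lemma vec9_6 (x0 x1 x2 x3 x4 x5 x6 x7 x8 : F) : ![x0,x1,x2,x3,x4,x5,x6,x7,x8] 6 = x6 := rfl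
lemma vec9_7 (x0 x1 x2 x3 x4 x5 x6 x7 x8 : F) : ![x0,x1,x2,x3,x4,x5,x6,x7,x8] 7 = x7 := rfl
lemma vec9_8 (x0 x1 x2 x3 x4 x5 x6 x7 x8 : F) : ![x0,x1,x2,x3,x4,x5,x6,x7,x8] 8 = x8 := rfl

end Aux

/-- Over a field of characteristic `≠ 2, 3`, for `t ∈ F` and `0 ≠ a ∈ F`, the algebras
`As₁,₁¹⁷(3)(t)` and `As₁,₁¹⁷(3)(a³t)` are isomorphic. -/
theorem As1117_param_isomorphic {F : Type*} [Field F]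
    (h2 : (2 : F) ≠ 0) (h3 : (3 : F) ≠ 0) (t : F) (a : F) (ha : a ≠ 0) :
    ∃ g : Matrix (Fin 3) (Fin 3) F, IsUnit g ∧
      g * toMsc3 (F := F)
          !![0,0,a^3*t,0,a^3*t,0,a^3*t,0,0;
             1,0,0,0,0,a^3*t,0,a^3*t,0;
             0,1,0,1,0,0,0,0,a^3*t] =
        toMsc3 (F := F)
          !![0,0,t,0,t,0,t,0,0;
             1,0,0,0,0,t,0,t,0;
             0,1,0,1,0,0,0,0,t] * (g ⊗ₖ g) := by
  refine ⟨!![a,0,0;0,a^2,0;0,0,a^3], ?_, ?_⟩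
  · have hdet : (!![a,0,0;0,a^2,0;0,0,a^3] : Matrix (Fin 3) (Fin 3) F).det ≠ 0 := by
      simp [Matrix.det_fin_three]
      exact ha
    exact (isUnit_iff_isUnit_det _).mpr (isUnit_iff_ne_zero.mpr hdet)
  · ext i p
    obtain ⟨j, k⟩ := p
    fin_cases i <;> fin_cases j <;> fin_cases k <;>
      simp [toMsc3, Matrix.mul_apply, Fintype.sum_prod_type, Fin.sum_univ_three,
        kroneckerMap_apply, Matrix.vecHead, Matrix.vecTail, vec9_3, vec9_4, vec9_5, vec9_6, vec9_7, vec9_8] <;> ring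
end

section
/- Let F be a field with char(F) ∉ {2,3}, t ∈ F, and a ∈ F with a ≠ 0. Then the three-dimensional algebras with MSCs As₀⁴(3)(t), with rows (0,0,0,0,0,0,0,0,0), (1,0,0,0,0,0,0,0,t), (0,0,0,0,0,0,0,0,0), and As₀⁴(3)(a²t), with rows (0,0,0,0,0,0,0,0,0), (1,0,0,0,0,0,0,0,a²t), (0,0,0,0,0,0,0,0,0), are isomorphic: there exists g ∈ GL₃(F) with g·As₀⁴(3)(a²t) = As₀⁴(3)(t)·(g ⊗ g). -/
open Matrix Kronecker

private lemma vec9_zero {F : Type*} [Field F] (i : Fin 9) :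
    (![0,0,0,0,0,0,0,0,0] : Fin 9 → F) i = 0 := by fin_cases i <;> rfl

private lemma vec9_five {F : Type*} [Field F] (x : F) :
    (![1,0,0,0,0,0,0,0,x] : Fin 9 → F) 5 = 0 := rfl

private lemma vec9_six {F : Type*} [Field F] (x : F) :
    (![1,0,0,0,0,0,0,0,x] : Fin 9 → F) 6 = 0 := rfl

private lemma vec9_seven {F : Type*} [Field F] (x : F) :
    (![1,0,0,0,0,0,0,0,x] : Fin 9 → F) 7 = 0 := rfl

private lemma vec9_eight {F : Type*} [Field F] (x : F) :
    (![1,0,0,0,0,0,0,0,x] : Fin 9 → F) 8 = x := rfl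

/-- Over a field of characteristic `≠ 2, 3`, for `t ∈ F` and `0 ≠ a ∈ F`, the algebras
`As₀⁴(3)(t)` and `As₀⁴(3)(a²t)` are isomorphic. -/
theorem As04_param_isomorphic {F : Type*} [Field F]
    (h2 : (2 : F) ≠ 0) (h3 : (3 : F) ≠ 0) (t : F) (a : F) (ha : a ≠ 0) :
    ∃ g : Matrix (Fin 3) (Fin 3) F, IsUnit g ∧
      g * toMsc3 (F := F)
          !![0,0,0,0,0,0,0,0,0; 1,0,0,0,0,0,0,0,a^2*t; 0,0,0,0,0,0,0,0,0] =
        toMsc3 (F := F)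
          !![0,0,0,0,0,0,0,0,0; 1,0,0,0,0,0,0,0,t; 0,0,0,0,0,0,0,0,0] * (g ⊗ₖ g) := by
  refine ⟨!![1,0,0;0,1,0;0,0,a], ?_, ?_⟩
  · have hdet : (!![1,0,0;0,1,0;0,0,a] : Matrix (Fin 3) (Fin 3) F).det = a := by
      simp [Matrix.det_fin_three]
    exact isUnit_iff_isUnit_det _ |>.mpr (by simp [hdet, ha])
  · ext i ⟨p, q⟩
    fin_cases i <;> fin_cases p <;> fin_cases q <;>
      simp [toMsc3, Matrix.mul_apply, Fintype.sum_prod_type, Fin.sum_univ_three,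
        kroneckerMap_apply] <;>
      norm_num [Matrix.cons_val_succ, Matrix.vecHead, Matrix.vecTail,
        vec9_zero, vec9_five, vec9_six, vec9_seven, vec9_eight] <;> ring
end

section
/- Over the field ℂ of complex numbers, let U₁³ be the MSC with rows (1,0,0,0,0,0,0,0,1), (0,1,0,1,0,1,0,−1,0), (0,0,1,0,0,0,1,0,0), and let A be the MSC As₂³(3)(1), with rows (1,0,0,0,1,1,0,1,1), (0,1,0,1,0,−1,0,1,0), (0,0,1,0,0,1,1,−1,0). Then the matrix g with rows (1,0,0), (0,−1,0), (0,1,−1) is invertible and satisfies U₁³ = g⁻¹ A (g ⊗ g); hence the complex algebras U₁³ and As₂³(3)(1) are isomorphic. -/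
open Matrix Kronecker

/-- Certifying `B = g⁻¹ A (g ⊗ g)` through `g B = A (g ⊗ g)` avoids computing `g⁻¹`. -/
lemma eq_inv_mul_mul_kronecker_of_mul_eq {R n : Type*} [CommRing R] [Fintype n] [DecidableEq n]
    {g : Matrix n n R} (hg : IsUnit g.det) {A B : Matrix n (n × n) R}
    (h : g * B = A * (g ⊗ₖ g)) : B = g⁻¹ * A * (g ⊗ₖ g) := by
  rw [Matrix.mul_assoc, ← h, nonsing_inv_mul_cancel_left _ _ hg]

/-- The MSC `U₁³`. -/
def mscU13 (F : Type*) [Ring F] : Matrix (Fin 3) (Fin 9) F :=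
  !![1,0,0,0,0,0,0,0,1; 0,1,0,1,0,1,0,-1,0; 0,0,1,0,0,0,1,0,0]

/-- The MSC `As₂³(3)(1)`. -/
def mscAs23One (F : Type*) [Ring F] : Matrix (Fin 3) (Fin 9) F :=
  !![1,0,0,0,1,1,0,1,1; 0,1,0,1,0,-1,0,1,0; 0,0,1,0,0,1,1,-1,0]

def isoU13As23One (F : Type*) [Ring F] : Matrix (Fin 3) (Fin 3) F :=
  !![1,0,0; 0,-1,0; 0,1,-1]

lemma det_isoU13As23One {R : Type*} [CommRing R] : (isoU13As23One R).det = 1 := by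
  simp [isoU13As23One, det_fin_three]

section
variable {F : Type*} [Field F]

@[simp]
lemma toMsc3_apply (M : Matrix (Fin 3) (Fin 9) F) (i a b : Fin 3) :
    toMsc3 M i (a, b) = M i ⟨b + 3 * a, by omega⟩ :=
  rfl

lemma isoU13As23One_mul_U13 :
    isoU13As23One F * toMsc3 (mscU13 F) =
      toMsc3 (mscAs23One F) * (isoU13As23One F ⊗ₖ isoU13As23One F) := by
  ext i ⟨a, b⟩
  fin_cases i <;> fin_cases a <;> fin_cases b <;>
    simp [isoU13As23One, mscU13, mscAs23One, mul_apply, Fin.sum_univ_three,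
      Fintype.sum_prod_type]

end

/-- Over `ℂ`, the matrix `g` with rows `(1,0,0), (0,−1,0), (0,1,−1)` is invertible and
satisfies `U₁³ = g⁻¹ ⬝ As₂³(3)(1) ⬝ (g ⊗ g)`; hence the complex algebras `U₁³` and
`As₂³(3)(1)` are isomorphic. -/
theorem U13_iso_As23_one :
    IsUnit (!![1,0,0; 0,-1,0; 0,1,-1] : Matrix (Fin 3) (Fin 3) ℂ) ∧
      toMsc3 (F := ℂ) !![1,0,0,0,0,0,0,0,1; 0,1,0,1,0,1,0,-1,0; 0,0,1,0,0,0,1,0,0] =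
        (!![1,0,0; 0,-1,0; 0,1,-1] : Matrix (Fin 3) (Fin 3) ℂ)⁻¹ *
          toMsc3 (F := ℂ) !![1,0,0,0,1,1,0,1,1; 0,1,0,1,0,-1,0,1,0; 0,0,1,0,0,1,1,-1,0] *
          ((!![1,0,0; 0,-1,0; 0,1,-1] : Matrix (Fin 3) (Fin 3) ℂ) ⊗ₖ
            (!![1,0,0; 0,-1,0; 0,1,-1] : Matrix (Fin 3) (Fin 3) ℂ)) := by
  have hdet : IsUnit (isoU13As23One ℂ).det := by
    rw [det_isoU13As23One]
    exact isUnit_one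
  exact ⟨(isUnit_iff_isUnit_det _).2 hdet,
    eq_inv_mul_mul_kronecker_of_mul_eq hdet isoU13As23One_mul_U13⟩
end
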